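/- Suppose a $C^1$ solution $(q, G, Z)$ of the system $\frac{dq}{d\zeta} = -2GZq$, $\frac{dG}{d\zeta} = 2G[Z(1-G)-(Z^2+1)^{3/2}q^2]$, $\frac{dZ}{d\zeta} = (3G-1-Zq^2\sqrt{Z^2+1})(Z^2+1)$ on a maximal interval $[\zeta_*, \zeta^*)$ satisfies $Z > 0$, $0 < G < 1$, $q > 0$ throughout and $Z$ is bounded. If additionally $\lim_{\zeta \to \zeta^*} q(\zeta) = q_\infty > 0$, then a contradiction arises; hence $q(\zeta) \to 0$ as $\zeta \to \zeta^*$ (and $\zeta^* = \infty$ by boundedness). -/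

import Mathlib

/-! `q` is decreasing. If it had a positive limit `q∞`, then `G Z ≤ -q' / (2 q∞)` would be
integrable; since `(G Z)'` is bounded below on the bounded region where the solution lives,
this forces `G Z → 0` (Barbalat). Then `G' ≤ 2 G Z - 2 q∞² G` pushes `G` below `1/6`, after which
`Z' ≤ -(Z² + 1) / 2 ≤ -1/2`, so `Z` cannot stay positive. -/

open Filter

/-- `(q, G, Z)` solves the reduced system (R1E2)-(R1E4) on the set `s`. -/
def EVSol (q G Z : ℝ → ℝ) (s : Set ℝ) : Prop :=
  ∀ ζ ∈ s,
    HasDerivAt q (-(2 * G ζ * Z ζ * q ζ)) ζ ∧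
    HasDerivAt G (2 * G ζ * (Z ζ * (1 - G ζ)
        - Real.sqrt ((Z ζ)^2 + 1)^3 * (q ζ)^2)) ζ ∧
    HasDerivAt Z ((3 * G ζ - 1 - Z ζ * (q ζ)^2 * Real.sqrt ((Z ζ)^2 + 1))
        * ((Z ζ)^2 + 1)) ζ

open Set Topology MeasureTheory

theorem mul_sub_le_sub_of_le_hasDerivAt {f f' : ℝ → ℝ} {a C : ℝ}
    (hf : ∀ x ∈ Ici a, HasDerivAt f (f' x) x) (hC : ∀ x ∈ Ici a, C ≤ f' x)
    {x y : ℝ} (hx : a ≤ x) (hxy : x ≤ y) : C * (y - x) ≤ f y - f x := by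
  refine (convex_Ici a).mul_sub_le_image_sub_of_le_deriv
    (fun z hz => (hf z hz).continuousAt.continuousWithinAt) ?_ ?_ x hx y (hx.trans hxy) hxy
  · rw [interior_Ici]
    exact fun z hz => (hf z (mem_Ici.2 hz.le)).differentiableAt.differentiableWithinAt
  · rw [interior_Ici]
    exact fun z hz => (hf z (mem_Ici.2 hz.le)).deriv ▸ hC z (mem_Ici.2 hz.le)

theorem sub_le_mul_sub_of_hasDerivAt_le {f f' : ℝ → ℝ} {a C : ℝ}
    (hf : ∀ x ∈ Ici a, HasDerivAt f (f' x) x) (hC : ∀ x ∈ Ici a, f' x ≤ C)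
    {x y : ℝ} (hx : a ≤ x) (hxy : x ≤ y) : f y - f x ≤ C * (y - x) := by
  have := mul_sub_le_sub_of_le_hasDerivAt (f := fun z => -f z) (fun z hz => (hf z hz).neg)
    (fun z hz => neg_le_neg (hC z hz)) hx hxy
  linarith

theorem AntitoneOn.le_of_tendsto_atTop {f : ℝ → ℝ} {a l : ℝ} (hf : AntitoneOn f (Ici a))
    (hl : Tendsto f atTop (𝓝 l)) {x : ℝ} (hx : x ∈ Ici a) : l ≤ f x :=
  le_of_tendsto hl <| by
    filter_upwards [eventually_ge_atTop x] with y hy using hf hx (mem_Ici.2 (hx.out.trans hy)) hy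

theorem AntitoneOn.exists_tendsto_atTop {f : ℝ → ℝ} {a : ℝ} (hf : AntitoneOn f (Ici a))
    (hbdd : BddBelow (f '' Ici a)) : ∃ l, Tendsto f atTop (𝓝 l) := by
  have hg : Antitone fun x => f (max a x) := fun x y hxy =>
    hf (mem_Ici.2 (le_max_left a x)) (mem_Ici.2 (le_max_left a y)) (max_le_max_left a hxy)
  have hgbdd : BddBelow (range fun x => f (max a x)) :=
    hbdd.mono (range_subset_iff.2 fun x => mem_image_of_mem f (mem_Ici.2 (le_max_left a x)))
  refine ⟨_, (tendsto_atTop_ciInf hg hgbdd).congr' ?_⟩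
  filter_upwards [eventually_ge_atTop a] with x hx
  rw [max_eq_right hx]

theorem tendsto_atBot_of_hasDerivAt_le_neg {f f' : ℝ → ℝ} {r : ℝ} (hr : 0 < r)
    (hf : ∀ᶠ x in atTop, HasDerivAt f (f' x) x ∧ f' x ≤ -r) : Tendsto f atTop atBot := by
  obtain ⟨a, ha⟩ := eventually_atTop.1 hf
  have hline : Tendsto (fun x => f a + -r * (x - a)) atTop atBot :=
    tendsto_atBot_add_const_left _ _ <|
      (tendsto_atTop_add_const_right _ (-a) tendsto_id).const_mul_atTop_of_neg (neg_neg_of_pos hr)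
  refine tendsto_atBot_mono' atTop ?_ hline
  filter_upwards [eventually_ge_atTop a] with x hx
  have := sub_le_mul_sub_of_hasDerivAt_le (fun z hz => (ha z hz).1) (fun z hz => (ha z hz).2)
    le_rfl hx
  linarith

theorem eventually_lt_of_hasDerivAt_le_sub_mul {f f' : ℝ → ℝ} {c ε b : ℝ} (hc : 0 < c)
    (hf : ∀ᶠ x in atTop, HasDerivAt f (f' x) x ∧ f' x ≤ ε - c * f x) (hb : ε / c < b) :
    ∀ᶠ x in atTop, f x < b := by
  obtain ⟨a, ha⟩ := eventually_atTop.1 hf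
  have hbound : ∀ x ∈ Ici a, f x ≤ gronwallBound (f a) (-c) ε (x - a) := fun x hx =>
    le_gronwallBound_of_liminf_deriv_right_le
      (fun z hz => (ha z hz.1).1.continuousAt.continuousWithinAt)
      (fun z hz _ hr => (ha z hz.1).1.hasDerivWithinAt.liminf_right_slope_le hr) le_rfl
      (fun z hz => by linarith [(ha z hz.1).2]) x ⟨hx, le_rfl⟩
  have hlim : Tendsto (fun x => gronwallBound (f a) (-c) ε (x - a)) atTop (𝓝 (ε / c)) := by
    have hexp : Tendsto (fun x => Real.exp (-c * (x - a))) atTop (𝓝 0) :=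
      Real.tendsto_exp_atBot.comp <|
        (tendsto_atTop_add_const_right _ (-a) tendsto_id).const_mul_atTop_of_neg (neg_neg_of_pos hc)
    rw [gronwallBound_of_K_ne_0 (neg_ne_zero.2 hc.ne')]
    convert (hexp.const_mul (f a)).add ((hexp.sub_const 1).const_mul (ε / -c)) using 2
    field_simp
    ring
  filter_upwards [eventually_ge_atTop a, hlim.eventually_lt_const hb] with x hx hxb
  exact (hbound x hx).trans_lt hxb

/-- Barbalat's lemma, with a one-sided derivative bound in place of uniform continuity. -/
theorem tendsto_zero_of_integrableOn_of_le_hasDerivAt {f f' : ℝ → ℝ} {a K : ℝ}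
    (hf : ∀ x ∈ Ici a, HasDerivAt f (f' x) x) (hK : ∀ x ∈ Ici a, -K ≤ f' x)
    (hnonneg : ∀ x ∈ Ici a, 0 ≤ f x) (hint : IntegrableOn f (Ioi a)) :
    Tendsto f atTop (𝓝 0) := by
  set K' := max K 1
  have hK'pos : 0 < K' := lt_max_of_lt_right one_pos
  have hK' : ∀ x ∈ Ici a, -K' ≤ f' x := fun x hx =>
    (neg_le_neg (le_max_left K 1)).trans (hK x hx)
  have hfi : ∀ x y, a ≤ x → a ≤ y → IntervalIntegrable f volume x y := fun x y hx hy =>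
    intervalIntegrable_iff.2 <|
      hint.mono_set (Ioc_subset_Ioi_self.trans (Ioi_subset_Ioi (le_min hx hy)))
  refine tendsto_order.2 ⟨fun b hb => ?_, fun ε hε => ?_⟩
  · filter_upwards [eventually_ge_atTop a] with x hx
    exact hb.trans_le (hnonneg x hx)
  set δ := ε / (2 * K')
  have hδ : 0 < δ := by positivity
  have hslab : Tendsto (fun t => ∫ x in t..t + δ, f x) atTop (𝓝 0) := by
    have hF : Tendsto (fun t => ∫ x in a..t, f x) atTop (𝓝 (∫ x in Ioi a, f x)) :=
      intervalIntegral_tendsto_integral_Ioi a hint tendsto_id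
    have hFδ : Tendsto (fun t => ∫ x in a..t + δ, f x) atTop (𝓝 (∫ x in Ioi a, f x)) :=
      intervalIntegral_tendsto_integral_Ioi a hint (tendsto_atTop_add_const_right _ δ tendsto_id)
    refine (sub_self (∫ x in Ioi a, f x) ▸ hFδ.sub hF).congr' ?_
    filter_upwards [eventually_ge_atTop a] with t ht
    exact intervalIntegral.integral_interval_sub_left (hfi a _ le_rfl (by linarith))
      (hfi a _ le_rfl ht)
  filter_upwards [eventually_ge_atTop a,
    hslab.eventually_lt_const (show 0 < δ * (ε / 2) by positivity)] with t ht hsmall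
  by_contra! hft
  -- a large value at `t` keeps `f ≥ ε / 2` on `[t, t + δ]`, making that slab of the integral large
  have hlow : ∀ u ∈ Icc t (t + δ), ε / 2 ≤ f u := by
    intro u hu
    have hdrop := mul_sub_le_sub_of_le_hasDerivAt hf hK' ht hu.1
    have hKu : K' * (u - t) ≤ K' * δ := mul_le_mul_of_nonneg_left (by linarith [hu.2]) hK'pos.le
    have hKδ : K' * δ = ε / 2 := by simp only [δ]; field_simp
    linarith
  have hslab_ge := intervalIntegral.integral_mono_on (by linarith) intervalIntegrable_const
    (hfi t (t + δ) ht (by linarith)) hlow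
  rw [intervalIntegral.integral_const, smul_eq_mul, add_sub_cancel_left] at hslab_ge
  linarith

noncomputable def fieldG (q G Z : ℝ) : ℝ := 2 * G * (Z * (1 - G) - Real.sqrt (Z ^ 2 + 1) ^ 3 * q ^ 2)

noncomputable def fieldZ (q G Z : ℝ) : ℝ := (3 * G - 1 - Z * q ^ 2 * Real.sqrt (Z ^ 2 + 1)) * (Z ^ 2 + 1)

namespace EVSol

variable {q G Z : ℝ → ℝ} {a : ℝ}

theorem hasDerivAt_G (hsol : EVSol q G Z (Ici a)) {ζ : ℝ} (hζ : ζ ∈ Ici a) :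
    HasDerivAt G (fieldG (q ζ) (G ζ) (Z ζ)) ζ :=
  (hsol ζ hζ).2.1

theorem hasDerivAt_Z (hsol : EVSol q G Z (Ici a)) {ζ : ℝ} (hζ : ζ ∈ Ici a) :
    HasDerivAt Z (fieldZ (q ζ) (G ζ) (Z ζ)) ζ :=
  (hsol ζ hζ).2.2

theorem deriv_q_nonpos (hpos : ∀ ζ ∈ Ici a, 0 < q ζ ∧ 0 < G ζ ∧ G ζ < 1 ∧ 0 < Z ζ)
    {ζ : ℝ} (hζ : ζ ∈ Ici a) : -(2 * G ζ * Z ζ * q ζ) ≤ 0 := by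
  obtain ⟨hq, hG, -, hZ⟩ := hpos ζ hζ
  have := mul_pos (mul_pos (mul_pos two_pos hG) hZ) hq
  linarith

theorem antitoneOn_q (hsol : EVSol q G Z (Ici a))
    (hpos : ∀ ζ ∈ Ici a, 0 < q ζ ∧ 0 < G ζ ∧ G ζ < 1 ∧ 0 < Z ζ) : AntitoneOn q (Ici a) :=
  fun x hx y _ hxy => by
    have := sub_le_mul_sub_of_hasDerivAt_le (C := 0) (fun ζ hζ => (hsol ζ hζ).1)
      (fun ζ hζ => deriv_q_nonpos hpos hζ) hx hxy
    linarith

theorem integrableOn_mul (hsol : EVSol q G Z (Ici a))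
    (hpos : ∀ ζ ∈ Ici a, 0 < q ζ ∧ 0 < G ζ ∧ G ζ < 1 ∧ 0 < Z ζ) {qinf : ℝ} (hqinf : 0 < qinf)
    (hlim : Tendsto q atTop (𝓝 qinf)) : IntegrableOn (fun ζ => G ζ * Z ζ) (Ioi a) := by
  have hq' : IntegrableOn (fun ζ => -(2 * G ζ * Z ζ * q ζ)) (Ioi a) :=
    integrableOn_Ioi_deriv_of_nonpos' (fun ζ hζ => (hsol ζ hζ).1)
      (fun ζ hζ => deriv_q_nonpos hpos (mem_Ici.2 hζ.out.le)) hlim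
  have hcont : ContinuousOn (fun ζ => G ζ * Z ζ) (Ioi a) := fun ζ hζ =>
    ((hsol.hasDerivAt_G (mem_Ici.2 hζ.out.le)).continuousAt.mul
      (hsol.hasDerivAt_Z (mem_Ici.2 hζ.out.le)).continuousAt).continuousWithinAt
  -- `G Z ≤ G Z q / q∞` since `q ≥ q∞`
  refine (hq'.neg.div_const (2 * qinf)).mono' (hcont.aestronglyMeasurable measurableSet_Ioi) ?_
  refine (ae_restrict_iff' measurableSet_Ioi).2 (Eventually.of_forall fun ζ hζ => ?_)
  have hζ' : ζ ∈ Ici a := mem_Ici.2 hζ.out.le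
  obtain ⟨hq, hG, -, hZ⟩ := hpos ζ hζ'
  have hqζ : qinf ≤ q ζ := (hsol.antitoneOn_q hpos).le_of_tendsto_atTop hlim hζ'
  rw [Real.norm_of_nonneg (mul_pos hG hZ).le, Pi.neg_apply, neg_neg, le_div_iff₀ (by positivity)]
  nlinarith [mul_pos hG hZ]

/-- Since the solution stays in a compact box, the continuous expression for `(G Z)'` is bounded. -/
theorem exists_neg_le_deriv_mul (hsol : EVSol q G Z (Ici a))
    (hpos : ∀ ζ ∈ Ici a, 0 < q ζ ∧ 0 < G ζ ∧ G ζ < 1 ∧ 0 < Z ζ)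
    (hbdd : ∃ M : ℝ, ∀ ζ ∈ Ici a, Z ζ ≤ M) :
    ∃ K, ∀ ζ ∈ Ici a, -K ≤ fieldG (q ζ) (G ζ) (Z ζ) * Z ζ + G ζ * fieldZ (q ζ) (G ζ) (Z ζ) := by
  obtain ⟨M, hM⟩ := hbdd
  set Φ : ℝ × ℝ × ℝ → ℝ := fun p =>
    fieldG p.1 p.2.1 p.2.2 * p.2.2 + p.2.1 * fieldZ p.1 p.2.1 p.2.2
  have hΦ : Continuous Φ := by simp only [Φ, fieldG, fieldZ]; fun_prop
  obtain ⟨K, hK⟩ := (isCompact_Icc.prod (isCompact_Icc.prod isCompact_Icc) :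
    IsCompact (Icc 0 (q a) ×ˢ Icc (0 : ℝ) 1 ×ˢ Icc 0 M)).exists_bound_of_continuousOn
    hΦ.continuousOn
  refine ⟨K, fun ζ hζ => neg_le_of_abs_le (hK (q ζ, G ζ, Z ζ) ?_)⟩
  obtain ⟨hq, hG, hG1, hZ⟩ := hpos ζ hζ
  exact ⟨⟨hq.le, hsol.antitoneOn_q hpos self_mem_Ici hζ hζ⟩, ⟨hG.le, hG1.le⟩, ⟨hZ.le, hM ζ hζ⟩⟩

theorem eventually_G_lt (hsol : EVSol q G Z (Ici a))
    (hpos : ∀ ζ ∈ Ici a, 0 < q ζ ∧ 0 < G ζ ∧ G ζ < 1 ∧ 0 < Z ζ) {qinf : ℝ} (hqinf : 0 < qinf)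
    (hlb : ∀ ζ ∈ Ici a, qinf ≤ q ζ) (hGZ : Tendsto (fun ζ => G ζ * Z ζ) atTop (𝓝 0)) :
    ∀ᶠ ζ in atTop, G ζ < 1 / 6 := by
  -- `G' ≤ q∞² / 12 - 2 q∞² G` eventually, and `(q∞² / 12) / (2 q∞²) = 1 / 24 < 1 / 6`
  refine eventually_lt_of_hasDerivAt_le_sub_mul (f' := fun ζ => fieldG (q ζ) (G ζ) (Z ζ))
    (c := 2 * qinf ^ 2) (ε := qinf ^ 2 / 12)
    (by positivity) ?_ (by field_simp; norm_num)
  filter_upwards [eventually_ge_atTop a,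
    hGZ.eventually (gt_mem_nhds (show 0 < qinf ^ 2 / 24 by positivity))] with ζ hζ hsmall
  refine ⟨hsol.hasDerivAt_G hζ, ?_⟩
  obtain ⟨hq, hG, hG1, hZ⟩ := hpos ζ hζ
  have hS : 1 ≤ Real.sqrt (Z ζ ^ 2 + 1) ^ 3 :=
    one_le_pow₀ (Real.one_le_sqrt.2 (by nlinarith))
  have hq2 : qinf ^ 2 ≤ q ζ ^ 2 := pow_le_pow_left₀ hqinf.le (hlb ζ hζ) 2
  have hdamp : G ζ * qinf ^ 2 ≤ G ζ * (Real.sqrt (Z ζ ^ 2 + 1) ^ 3 * q ζ ^ 2) :=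
    mul_le_mul_of_nonneg_left (by nlinarith) hG.le
  have hgrow : G ζ * (Z ζ * (1 - G ζ)) ≤ G ζ * Z ζ := by nlinarith [mul_pos hG hZ]
  simp only [fieldG]
  nlinarith

theorem tendsto_Z_atBot (hsol : EVSol q G Z (Ici a))
    (hpos : ∀ ζ ∈ Ici a, 0 < q ζ ∧ 0 < G ζ ∧ G ζ < 1 ∧ 0 < Z ζ)
    (hG : ∀ᶠ ζ in atTop, G ζ < 1 / 6) : Tendsto Z atTop atBot := by
  refine tendsto_atBot_of_hasDerivAt_le_neg (f' := fun ζ => fieldZ (q ζ) (G ζ) (Z ζ)) (r := 1 / 2) one_half_pos ?_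
  filter_upwards [eventually_ge_atTop a, hG] with ζ hζ hGζ
  refine ⟨hsol.hasDerivAt_Z hζ, ?_⟩
  have hdrift : Z ζ * q ζ ^ 2 * Real.sqrt (Z ζ ^ 2 + 1) ≥ 0 := by
    have := (hpos ζ hζ).2.2.2
    positivity
  simp only [fieldZ]
  nlinarith [sq_nonneg (Z ζ)]

theorem not_tendsto_pos (hsol : EVSol q G Z (Ici a))
    (hpos : ∀ ζ ∈ Ici a, 0 < q ζ ∧ 0 < G ζ ∧ G ζ < 1 ∧ 0 < Z ζ)
    (hbdd : ∃ M : ℝ, ∀ ζ ∈ Ici a, Z ζ ≤ M) {qinf : ℝ} (hqinf : 0 < qinf)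
    (hlim : Tendsto q atTop (𝓝 qinf)) : False := by
  have hlb : ∀ ζ ∈ Ici a, qinf ≤ q ζ := fun ζ hζ =>
    (hsol.antitoneOn_q hpos).le_of_tendsto_atTop hlim hζ
  obtain ⟨K, hK⟩ := hsol.exists_neg_le_deriv_mul hpos hbdd
  have hGZ : Tendsto (fun ζ => G ζ * Z ζ) atTop (𝓝 0) :=
    tendsto_zero_of_integrableOn_of_le_hasDerivAt
      (fun ζ hζ => (hsol.hasDerivAt_G hζ).mul (hsol.hasDerivAt_Z hζ)) hK
      (fun ζ hζ => (mul_pos (hpos ζ hζ).2.1 (hpos ζ hζ).2.2.2).le)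
      (hsol.integrableOn_mul hpos hqinf hlim)
  have hZ := hsol.tendsto_Z_atBot hpos (hsol.eventually_G_lt hpos hqinf hlb hGZ)
  obtain ⟨ζ, hζ, hZneg⟩ := ((eventually_ge_atTop a).and (hZ.eventually_lt_atBot 0)).exists
  exact (hpos ζ hζ).2.2.2.not_gt hZneg

end EVSol

/-- Part of Lemma LeT1: for a global solution (the maximal existence time is
infinite by boundedness) with `Z > 0` bounded, `0 < G < 1`, `q > 0`, the
limit of `q` cannot be positive; hence `q → 0`. -/
theorem stmt_16 (q G Z : ℝ → ℝ) (ζlo : ℝ)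
    (hsol : EVSol q G Z (Set.Ici ζlo))
    (hpos : ∀ ζ ∈ Set.Ici ζlo, 0 < q ζ ∧ 0 < G ζ ∧ G ζ < 1 ∧ 0 < Z ζ)
    (hbdd : ∃ M : ℝ, ∀ ζ ∈ Set.Ici ζlo, Z ζ ≤ M) :
    (∀ qinf : ℝ, 0 < qinf → Tendsto q atTop (nhds qinf) → False) ∧
    Tendsto q atTop (nhds 0) := by
  refine ⟨fun qinf hqinf hlim => hsol.not_tendsto_pos hpos hbdd hqinf hlim, ?_⟩
  obtain ⟨l, hl⟩ := (hsol.antitoneOn_q hpos).exists_tendsto_atTop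
    ⟨0, by rintro _ ⟨ζ, hζ, rfl⟩; exact (hpos ζ hζ).1.le⟩
  have hl0 : 0 ≤ l := ge_of_tendsto hl <| by
    filter_upwards [eventually_ge_atTop ζlo] with ζ hζ using (hpos ζ hζ).1.le
  obtain rfl | hlpos := hl0.eq_or_lt
  · exact hl
  · exact (hsol.not_tendsto_pos hpos hbdd hlpos hl).elim
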